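/- Let L(w) = Σ_{i=1}^n log(1 + exp(-y_i ⟨x_i, w⟩)) with y_i ∈ {-1,+1}. Let w ∈ ℝ^p, let u_j = w_j - ⌊w_j⌋, define γ_{ij} = ⌊w_j⌋ if y_i x_{ij} > 0 and γ_{ij} = ⌈w_j⌉ otherwise, and l_i = 1/(1 + exp(y_i ⟨x_i, γ_i⟩)). Suppose the integer vector w⁺ ∈ ℤ^p is produced by sequentially rounding each coordinate of w to ⌊w_j⌋ or ⌈w_j⌉, at each step choosing the coordinate-value pair minimizing Σ_i l_i² (⟨x_i, w⁺_{partial} - w⟩)². Then L(w⁺) - L(w) ≤ √(n Σ_{i=1}^n Σ_{j=1}^p (l_i x_{ij})² u_j (1 - u_j)). -/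

import Mathlib

/-!
The loss of sample `i` depends on `w` only through the margin `y_i ⟨x_i, w⟩`. On the box
`∏ⱼ [⌊w_j⌋, ⌈w_j⌉]`, which contains both `w` and `w⁺`, the margin is smallest at `γ_i`, so the
logistic loss has slope at most `l_i` there and, by the mean value theorem, changes by at most
`l_i |⟨x_i, w⁺ - w⟩|`. Each greedy rounding step does at least as well on the auxiliary loss
`Σ_i l_i² ⟨x_i, w⁺ - w⟩²` as the unbiased random rounding of `w_j` (up with probability `u_j`),
whose expected cost is `Σ_i (l_i x_ij)² u_j (1 - u_j)`. Cauchy–Schwarz over the `n` samples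
finishes the proof.
-/

open Finset Real

lemma hasDerivAt_log_one_add_exp_neg (t : ℝ) :
    HasDerivAt (fun s => log (1 + exp (-s))) (-sigmoid (-t)) t := by
  have h := (((hasDerivAt_neg' t).exp).const_add 1).log (by positivity)
  convert h using 1
  rw [← sigmoid_mul_rexp_neg, sigmoid_def]
  field_simp

lemma log_one_add_exp_neg_sub_le {m a b : ℝ} (ha : m ≤ a) (hb : m ≤ b) :
    log (1 + exp (-b)) - log (1 + exp (-a)) ≤ sigmoid (-m) * |b - a| := by
  have hslope : ∀ t ∈ Set.Ici m, ‖-sigmoid (-t)‖ ≤ sigmoid (-m) := fun t ht => by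
    rw [norm_neg, norm_of_nonneg (sigmoid_nonneg _)]
    exact sigmoid_le (neg_le_neg ht)
  have h := (convex_Ici m).norm_image_sub_le_of_norm_hasDerivWithin_le
    (fun t _ => (hasDerivAt_log_one_add_exp_neg t).hasDerivWithinAt) hslope ha hb
  exact (le_abs_self _).trans h

lemma sum_abs_le_sqrt_card_mul_sum_sq {ι : Type*} (s : Finset ι) (f : ι → ℝ) :
    ∑ i ∈ s, |f i| ≤ √(#s * ∑ i ∈ s, f i ^ 2) :=
  le_sqrt_of_sq_le <| by simpa using sq_sum_le_card_mul_sum_sq (s := s) (f := fun i => |f i|)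

lemma le_fract_average_of_le_floor_of_le_ceil (F : ℝ → ℝ) {z t : ℝ}
    (hfloor : t ≤ F (⌊z⌋ - z)) (hceil : t ≤ F (⌈z⌉ - z)) :
    t ≤ (1 - Int.fract z) * F (-Int.fract z) + Int.fract z * F (1 - Int.fract z) := by
  rw [← neg_sub, Int.self_sub_floor] at hfloor
  have h0 := Int.fract_nonneg z
  have h1 := Int.fract_lt_one z
  rcases eq_or_ne (Int.fract z) 0 with hz | hz
  · simpa [hz] using hfloor
  · rw [Int.ceil_sub_self_eq hz] at hceil
    nlinarith

lemma fract_average_weighted_sum_sq {ι : Type*} (s : Finset ι) (l a c : ι → ℝ) (u : ℝ) :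
    (1 - u) * ∑ i ∈ s, l i ^ 2 * (a i + c i * -u) ^ 2
        + u * ∑ i ∈ s, l i ^ 2 * (a i + c i * (1 - u)) ^ 2
      = ∑ i ∈ s, l i ^ 2 * a i ^ 2 + ∑ i ∈ s, (l i * c i) ^ 2 * (u * (1 - u)) := by
  simp only [mul_sum, ← sum_add_distrib]
  exact sum_congr rfl fun i _ => by ring

section SequentialRounding

variable {n p : ℕ} {l : ℕ → ℝ} {x : ℕ → ℕ → ℝ} {w : ℕ → ℝ} {wp : ℕ → ℤ}

lemma sum_sq_residual_le_of_sequential_rounding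
    (hmin : ∀ k < p, ∀ v ∈ ({⌊w k⌋, ⌈w k⌉} : Set ℤ),
      ∑ i ∈ range n, l i ^ 2 *
        ((∑ j ∈ range k, x i j * ((wp j : ℝ) - w j)) + x i k * ((wp k : ℝ) - w k)) ^ 2
      ≤ ∑ i ∈ range n, l i ^ 2 *
        ((∑ j ∈ range k, x i j * ((wp j : ℝ) - w j)) + x i k * ((v : ℝ) - w k)) ^ 2)
    {k : ℕ} (hk : k ≤ p) :
    ∑ i ∈ range n, l i ^ 2 * (∑ j ∈ range k, x i j * ((wp j : ℝ) - w j)) ^ 2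
      ≤ ∑ i ∈ range n, ∑ j ∈ range k,
          (l i * x i j) ^ 2 * (Int.fract (w j) * (1 - Int.fract (w j))) := by
  induction k with
  | zero => simp
  | succ k ih =>
    set a : ℕ → ℝ := fun i => ∑ j ∈ range k, x i j * ((wp j : ℝ) - w j)
    set F : ℝ → ℝ := fun d => ∑ i ∈ range n, l i ^ 2 * (a i + x i k * d) ^ 2
    have hround : F (wp k - w k) ≤ (1 - Int.fract (w k)) * F (-Int.fract (w k))
        + Int.fract (w k) * F (1 - Int.fract (w k)) :=
      le_fract_average_of_le_floor_of_le_ceil F (hmin k hk _ (by simp)) (hmin k hk _ (by simp))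
    calc ∑ i ∈ range n, l i ^ 2 * (∑ j ∈ range (k + 1), x i j * ((wp j : ℝ) - w j)) ^ 2
        = F (wp k - w k) := by simp only [F, a, sum_range_succ]
      _ ≤ ∑ i ∈ range n, l i ^ 2 * a i ^ 2
          + ∑ i ∈ range n, (l i * x i k) ^ 2 * (Int.fract (w k) * (1 - Int.fract (w k))) :=
        hround.trans_eq (fract_average_weighted_sum_sq _ _ _ _ _)
      _ ≤ _ := by
        simp only [sum_range_succ, sum_add_distrib]
        exact add_le_add (ih (Nat.le_of_succ_le hk)) le_rfl

end SequentialRounding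

lemma margin_floor_ceil_le (p : ℕ) (x : ℕ → ℝ) (y : ℝ) {w v : ℕ → ℝ}
    (hv : ∀ j < p, ⌊w j⌋ ≤ v j ∧ v j ≤ ⌈w j⌉) :
    y * ∑ j ∈ range p, x j * (if 0 < y * x j then (⌊w j⌋ : ℝ) else (⌈w j⌉ : ℝ))
      ≤ y * ∑ j ∈ range p, x j * v j := by
  simp only [mul_sum, ← mul_assoc]
  refine sum_le_sum fun j hj => ?_
  obtain ⟨hfloor, hceil⟩ := hv j (mem_range.1 hj)
  split_ifs with h
  · exact mul_le_mul_of_nonneg_left hfloor h.le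
  · exact mul_le_mul_of_nonpos_left hceil (not_lt.1 h)

lemma logistic_loss_sub_le_of_floor_ceil (p : ℕ) (x : ℕ → ℝ) {y : ℝ} (hy : y = 1 ∨ y = -1)
    {w : ℕ → ℝ} {wp : ℕ → ℤ} (hmem : ∀ j < p, wp j = ⌊w j⌋ ∨ wp j = ⌈w j⌉) :
    log (1 + exp (-y * ∑ j ∈ range p, x j * (wp j : ℝ)))
        - log (1 + exp (-y * ∑ j ∈ range p, x j * w j))
      ≤ |1 / (1 + exp (y * ∑ j ∈ range p, x j *
          (if 0 < y * x j then (⌊w j⌋ : ℝ) else (⌈w j⌉ : ℝ))))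
        * ∑ j ∈ range p, x j * ((wp j : ℝ) - w j)| := by
  have hw : ∀ j < p, (⌊w j⌋ : ℝ) ≤ w j ∧ w j ≤ ⌈w j⌉ := fun j _ =>
    ⟨Int.floor_le _, Int.le_ceil _⟩
  have hwp : ∀ j < p, (⌊w j⌋ : ℝ) ≤ wp j ∧ (wp j : ℝ) ≤ ⌈w j⌉ := fun j hj => by
    have : (⌊w j⌋ : ℝ) ≤ ⌈w j⌉ := mod_cast Int.floor_le_ceil (w j)
    rcases hmem j hj with h | h <;> rw [h] <;> constructor <;> linarith
  have hdiff : |y * ∑ j ∈ range p, x j * (wp j : ℝ) - y * ∑ j ∈ range p, x j * w j|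
      = |∑ j ∈ range p, x j * ((wp j : ℝ) - w j)| := by
    rw [← mul_sub, ← sum_sub_distrib, abs_mul]
    rcases hy with rfl | rfl <;> simp [mul_sub]
  simp only [neg_mul]
  convert log_one_add_exp_neg_sub_le (margin_floor_ceil_le p x y hw)
    (margin_floor_ceil_le p x y hwp) using 1
  rw [hdiff, abs_mul, sigmoid_def, neg_neg, one_div,
    abs_of_pos (inv_pos.2 (by positivity : (0 : ℝ) < 1 + exp _))]

/-- FasterRisk rounding theorem (Theorem 1): if the integer vector w⁺ is produced by
sequentially rounding each coordinate of w to ⌊w_j⌋ or ⌈w_j⌉, at each step choosing the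
value minimizing the auxiliary weighted squared error with weights
l_i = 1/(1+exp(y_i ⟨x_i, γ_i⟩)), γ_{ij} = ⌊w_j⌋ if y_i x_{ij} > 0 else ⌈w_j⌉, then
L(w⁺) - L(w) ≤ √(n Σ_i Σ_j (l_i x_{ij})² u_j (1-u_j)) where u_j = w_j - ⌊w_j⌋. -/
theorem auxiliaryLossRounding_bound (n p : ℕ) (x : ℕ → ℕ → ℝ) (y : ℕ → ℝ)
    (hy : ∀ i, y i = 1 ∨ y i = -1) (w : ℕ → ℝ) (wp : ℕ → ℤ)
    (hmem : ∀ j < p, wp j = ⌊w j⌋ ∨ wp j = ⌈w j⌉)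
    (hmin : ∀ k < p, ∀ v ∈ ({⌊w k⌋, ⌈w k⌉} : Set ℤ),
      ∑ i ∈ Finset.range n,
        (1 / (1 + Real.exp (y i * ∑ j' ∈ Finset.range p, x i j' *
          (if 0 < y i * x i j' then (⌊w j'⌋ : ℝ) else (⌈w j'⌉ : ℝ))))) ^ 2 *
        ((∑ j ∈ Finset.range k, x i j * ((wp j : ℝ) - w j)) + x i k * ((wp k : ℝ) - w k)) ^ 2
      ≤ ∑ i ∈ Finset.range n,
        (1 / (1 + Real.exp (y i * ∑ j' ∈ Finset.range p, x i j' *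
          (if 0 < y i * x i j' then (⌊w j'⌋ : ℝ) else (⌈w j'⌉ : ℝ))))) ^ 2 *
        ((∑ j ∈ Finset.range k, x i j * ((wp j : ℝ) - w j)) + x i k * ((v : ℝ) - w k)) ^ 2) :
    (∑ i ∈ Finset.range n, Real.log (1 + Real.exp (-(y i) * ∑ j ∈ Finset.range p, x i j * (wp j : ℝ))))
      - (∑ i ∈ Finset.range n, Real.log (1 + Real.exp (-(y i) * ∑ j ∈ Finset.range p, x i j * w j)))
    ≤ Real.sqrt (n * ∑ i ∈ Finset.range n, ∑ j ∈ Finset.range p,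
        ((1 / (1 + Real.exp (y i * ∑ j' ∈ Finset.range p, x i j' *
          (if 0 < y i * x i j' then (⌊w j'⌋ : ℝ) else (⌈w j'⌉ : ℝ))))) * x i j) ^ 2 *
        ((w j - ⌊w j⌋) * (1 - (w j - ⌊w j⌋)))) := by
  set l : ℕ → ℝ := fun i => 1 / (1 + exp (y i * ∑ j' ∈ range p, x i j' *
    (if 0 < y i * x i j' then (⌊w j'⌋ : ℝ) else (⌈w j'⌉ : ℝ))))
  set r : ℕ → ℝ := fun i => ∑ j ∈ range p, x i j * ((wp j : ℝ) - w j)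
  have hresidual : ∑ i ∈ range n, (l i * r i) ^ 2
      ≤ ∑ i ∈ range n, ∑ j ∈ range p,
          (l i * x i j) ^ 2 * (Int.fract (w j) * (1 - Int.fract (w j))) := by
    simpa only [mul_pow] using sum_sq_residual_le_of_sequential_rounding hmin le_rfl
  calc _ = ∑ i ∈ range n, (log (1 + exp (-y i * ∑ j ∈ range p, x i j * (wp j : ℝ)))
        - log (1 + exp (-y i * ∑ j ∈ range p, x i j * w j))) := (sum_sub_distrib ..).symm
    _ ≤ ∑ i ∈ range n, |l i * r i| :=
      sum_le_sum fun i _ => logistic_loss_sub_le_of_floor_ceil p (x i) (hy i) hmem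
    _ ≤ √(n * ∑ i ∈ range n, (l i * r i) ^ 2) := by
      simpa using sum_abs_le_sqrt_card_mul_sum_sq (range n) (fun i => l i * r i)
    _ ≤ _ := sqrt_le_sqrt (mul_le_mul_of_nonneg_left hresidual n.cast_nonneg)
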